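/- For n ≥ 2 consider the interaction system with n nodes, each with action space {x,y}, and deterministic historyless self-independent reaction functions f_i defined by: f_i outputs x if the current actions of all n−1 other nodes are x, and outputs y otherwise. This system has exactly two stable states, the all-x profile and the all-y profile, and: (i) for every r with 1 ≤ r < n−1 the system is r-convergent; (ii) the system is not (n−1)-convergent, i.e., there exist an initial profile and an (n−1)-fair schedule under which the dynamics never reaches a stable state and is not eventually constant. -/

import Mathlib

/-- A schedule `σ` is fair if every node is activated infinitely often. -/
def Fair {n : ℕ} (σ : ℕ → Finset (Fin n)) : Prop :=
  ∀ i : Fin n, ∀ N : ℕ, ∃ t, N ≤ t ∧ i ∈ σ t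

/-- A schedule is `r`-fair if every node is activated at least once in every
`r` consecutive time steps. -/
def RFair {n : ℕ} (r : ℕ) (σ : ℕ → Finset (Fin n)) : Prop :=
  ∀ i : Fin n, ∀ t0 : ℕ, ∃ t, t0 ≤ t ∧ t < t0 + r ∧ i ∈ σ t

/-- A (deterministic, historyless) reaction function is self-independent if
it does not depend on node `i`'s own action. -/
def SelfIndependent {n : ℕ} {A : Fin n → Type*} (i : Fin n)
    (g : (∀ j, A j) → A i) : Prop :=
  ∀ a b : ∀ j, A j, (∀ j, j ≠ i → a j = b j) → g a = g b

/-- A stable state is a fixed point of all reaction functions. -/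
def Stable {n : ℕ} {A : Fin n → Type*}
    (g : ∀ i : Fin n, (∀ j, A j) → A i) (a : ∀ j, A j) : Prop :=
  ∀ i, g i a = a i

/-- The `(s0, σ)`-dynamics of a system of deterministic historyless reaction
functions: at each time step, each activated node reacts to the current
profile and the other nodes repeat their previous action. -/
def dynamics {n : ℕ} {A : Fin n → Type*}
    (g : ∀ i : Fin n, (∀ j, A j) → A i) (s0 : ∀ j, A j)
    (σ : ℕ → Finset (Fin n)) : ℕ → ∀ j, A j
  | 0 => s0
  | t + 1 => fun i =>
      if i ∈ σ (t + 1) then g i (dynamics g s0 σ t) else dynamics g s0 σ t i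

/-- A sequence converges if it is eventually constant. -/
def EventuallyConstant {α : Type*} (s : ℕ → α) : Prop :=
  ∃ t0 : ℕ, ∀ t, t0 ≤ t → s t = s t0

/-- The system is convergent if the dynamics converges for every initial
profile and every fair schedule. -/
def Convergent {n : ℕ} {A : Fin n → Type*}
    (g : ∀ i : Fin n, (∀ j, A j) → A i) : Prop :=
  ∀ (s0 : ∀ j, A j) (σ : ℕ → Finset (Fin n)),
    (∀ t, (σ t).Nonempty) → Fair σ → EventuallyConstant (dynamics g s0 σ)

/-- The system is `r`-convergent if the dynamics converges for every initial
profile and every `r`-fair schedule. -/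
def RConvergent {n : ℕ} {A : Fin n → Type*} (r : ℕ)
    (g : ∀ i : Fin n, (∀ j, A j) → A i) : Prop :=
  ∀ (s0 : ∀ j, A j) (σ : ℕ → Finset (Fin n)),
    (∀ t, (σ t).Nonempty) → RFair r σ → EventuallyConstant (dynamics g s0 σ)

/-- The two actions `x` and `y`. -/
inductive XY : Type
  | x : XY
  | y : XY
deriving DecidableEq

/-- The reaction function of the example: node `i` chooses `x` iff the current
actions of all `n-1` other nodes are `x`, and chooses `y` otherwise. -/
def allXReaction (n : ℕ) (i : Fin n) (a : Fin n → XY) : XY :=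
  if ∀ j : Fin n, j ≠ i → a j = XY.x then XY.x else XY.y

/- While two nodes play `y`, every activated node plays `y`, so the `y`s only spread and an
`r`-fair schedule turns the profile into the absorbing all-`y` profile within `r` steps.
Otherwise exactly one node plays `y` at each time `t`, say `k t`, and a node activated at time
`t + 1` is `k t` or `k (t + 1)`; during the steps `1, …, r` all `n` nodes are activated, which
forces `n ≤ r + 1`. For `r = n - 1` a single `y` can travel around the ring forever: activating
`{k, k + 1}` hands the `y` from `k` to `k + 1`. -/

theorem XY.ne_x_iff {a : XY} : a ≠ .x ↔ a = .y := by
  cases a <;> simp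

section Dynamics

variable {n : ℕ} {A : Fin n → Type*} {g : ∀ i : Fin n, (∀ j, A j) → A i} {s0 : ∀ j, A j}
  {σ : ℕ → Finset (Fin n)}

theorem dynamics_succ_apply (t : ℕ) (i : Fin n) :
    dynamics g s0 σ (t + 1) i =
      if i ∈ σ (t + 1) then g i (dynamics g s0 σ t) else dynamics g s0 σ t i :=
  rfl

theorem dynamics_succ_of_stable {t : ℕ} (h : Stable g (dynamics g s0 σ t)) :
    dynamics g s0 σ (t + 1) = dynamics g s0 σ t := by
  funext i
  rw [dynamics_succ_apply]
  split_ifs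
  · exact h i
  · rfl

theorem eventuallyConstant_dynamics_of_stable {T : ℕ} (h : Stable g (dynamics g s0 σ T)) :
    EventuallyConstant (dynamics g s0 σ) := by
  refine ⟨T, fun t ht => ?_⟩
  induction t, ht using Nat.le_induction with
  | base => rfl
  | succ t _ ih => rw [dynamics_succ_of_stable (ih ▸ h), ih]

theorem RFair.fair {r : ℕ} (h : RFair r σ) : Fair σ :=
  fun i N => (h i N).imp fun _ ht => ⟨ht.1, ht.2.2⟩

theorem exists_stable_of_eventuallyConstant (hσ : Fair σ)
    (h : EventuallyConstant (dynamics g s0 σ)) : ∃ t, Stable g (dynamics g s0 σ t) := by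
  obtain ⟨T, hT⟩ := h
  refine ⟨T, fun i => ?_⟩
  obtain ⟨t, hTt, hi⟩ := hσ i (T + 1)
  obtain ⟨m, rfl⟩ := Nat.exists_eq_add_of_le' (show 1 ≤ t by omega)
  have hstep := dynamics_succ_apply (g := g) (s0 := s0) (σ := σ) m i
  rwa [if_pos hi, hT (m + 1) (by omega), hT m (by omega), eq_comm] at hstep

theorem card_le_of_rFair_of_mem_pair {r : ℕ} (hσ : RFair r σ) (k : ℕ → Fin n)
    (hk : ∀ t, ∀ i ∈ σ (t + 1), i = k t ∨ i = k (t + 1)) : n ≤ r + 1 := by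
  have hcover : (Finset.univ : Finset (Fin n)) ⊆ (Finset.range (r + 1)).image k := by
    intro i _
    obtain ⟨t, ht1, htr, hi⟩ := hσ i 1
    obtain ⟨m, rfl⟩ := Nat.exists_eq_add_of_le' ht1
    rcases hk m i hi with rfl | rfl <;>
      exact Finset.mem_image_of_mem _ (Finset.mem_range.2 (by omega))
  simpa using (Finset.card_le_card hcover).trans Finset.card_image_le

end Dynamics

section AllXReaction

variable {n : ℕ}

theorem allXReaction_eq_y_of_ne {i j : Fin n} {a : Fin n → XY} (hji : j ≠ i) (hj : a j = .y) :
    allXReaction n i a = .y := by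
  rw [allXReaction, if_neg]
  intro h
  simp [h j hji] at hj

theorem stable_allXReaction_iff [Nontrivial (Fin n)] (a : Fin n → XY) :
    Stable (allXReaction n) a ↔ (a = fun _ => XY.x) ∨ (a = fun _ => XY.y) := by
  constructor
  · intro h
    by_cases hx : ∀ j, a j = .x
    · exact .inl (funext hx)
    push Not at hx
    obtain ⟨k, hk⟩ := hx
    rw [XY.ne_x_iff] at hk
    refine .inr (funext fun i => ?_)
    rcases eq_or_ne k i with rfl | hki
    · exact hk
    · rw [← h i]
      exact allXReaction_eq_y_of_ne hki hk
  · rintro (rfl | rfl) i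
    · simp [allXReaction]
    · obtain ⟨j, hj⟩ := exists_ne i
      exact allXReaction_eq_y_of_ne hj rfl

def HasTwoY (a : Fin n → XY) : Prop :=
  ∃ j k, j ≠ k ∧ a j = .y ∧ a k = .y

theorem allXReaction_eq_y_of_hasTwoY {a : Fin n → XY} (h : HasTwoY a) (i : Fin n) :
    allXReaction n i a = .y := by
  obtain ⟨j, k, hjk, hj, hk⟩ := h
  rcases eq_or_ne j i with rfl | hji
  · exact allXReaction_eq_y_of_ne hjk.symm hk
  · exact allXReaction_eq_y_of_ne hji hj

theorem exists_eq_y_iff_of_not_hasTwoY {a : Fin n → XY} (hx : a ≠ fun _ => .x)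
    (h : ¬HasTwoY a) : ∃ k, ∀ j, a j = .y ↔ j = k := by
  obtain ⟨k, hk⟩ := Function.ne_iff.1 hx
  rw [XY.ne_x_iff] at hk
  refine ⟨k, fun j => ⟨fun hj => ?_, fun hjk => hjk ▸ hk⟩⟩
  by_contra hjk
  exact h ⟨j, k, hjk, hj, hk⟩

section TwoY

variable {s0 : Fin n → XY} {σ : ℕ → Finset (Fin n)} {t : ℕ}

local notation "s" => dynamics (allXReaction n) s0 σ

theorem dynamics_succ_apply_eq_y_of_hasTwoY {i : Fin n} (h : HasTwoY (s t))
    (hi : i ∈ σ (t + 1) ∨ s t i = .y) : s (t + 1) i = .y := by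
  rw [dynamics_succ_apply]
  split_ifs with hσ
  · exact allXReaction_eq_y_of_hasTwoY h i
  · exact hi.resolve_left hσ

theorem hasTwoY_dynamics_succ (h : HasTwoY (s t)) : HasTwoY (s (t + 1)) := by
  obtain ⟨j, k, hjk, hj, hk⟩ := h
  exact ⟨j, k, hjk, dynamics_succ_apply_eq_y_of_hasTwoY ⟨j, k, hjk, hj, hk⟩ (.inr hj),
    dynamics_succ_apply_eq_y_of_hasTwoY ⟨j, k, hjk, hj, hk⟩ (.inr hk)⟩

theorem hasTwoY_dynamics_of_le (h : HasTwoY (s t)) {t' : ℕ} (ht : t ≤ t') : HasTwoY (s t') := by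
  induction t', ht using Nat.le_induction with
  | base => exact h
  | succ t' _ ih => exact hasTwoY_dynamics_succ ih

theorem dynamics_apply_eq_y_of_hasTwoY_of_le {i : Fin n} (h : HasTwoY (s t))
    (hi : s t i = .y) {t' : ℕ} (ht : t ≤ t') : s t' i = .y := by
  induction t', ht using Nat.le_induction with
  | base => exact hi
  | succ t' ht ih =>
    exact dynamics_succ_apply_eq_y_of_hasTwoY (hasTwoY_dynamics_of_le h ht) (.inr ih)

theorem dynamics_eq_allY_of_hasTwoY {r : ℕ} (hσ : RFair r σ) (h : HasTwoY (s t)) :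
    s (t + r) = fun _ => .y := by
  funext i
  obtain ⟨τ, hτ, hτr, hi⟩ := hσ i (t + 1)
  obtain ⟨m, rfl⟩ := Nat.exists_eq_add_of_le' (show 1 ≤ τ by omega)
  have hm := hasTwoY_dynamics_of_le h (show t ≤ m by omega)
  exact dynamics_apply_eq_y_of_hasTwoY_of_le (hasTwoY_dynamics_succ hm)
    (dynamics_succ_apply_eq_y_of_hasTwoY hm (.inl hi)) (by omega)

end TwoY

theorem allXReaction_rConvergent {r : ℕ} (hr : r < n - 1) : RConvergent r (allXReaction n) := by
  have : Nontrivial (Fin n) := Fin.nontrivial_iff_two_le.mpr (by omega)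
  intro s0 σ _ hσ
  by_cases h2 : ∃ t, HasTwoY (dynamics (allXReaction n) s0 σ t)
  · obtain ⟨t, ht⟩ := h2
    apply eventuallyConstant_dynamics_of_stable (T := t + r)
    rw [dynamics_eq_allY_of_hasTwoY hσ ht]
    exact (stable_allXReaction_iff _).2 (.inr rfl)
  by_cases hx : ∃ t, dynamics (allXReaction n) s0 σ t = fun _ => .x
  · obtain ⟨t, ht⟩ := hx
    apply eventuallyConstant_dynamics_of_stable (T := t)
    rw [ht]
    exact (stable_allXReaction_iff _).2 (.inl rfl)
  push Not at h2 hx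
  choose k hk using fun t => exists_eq_y_iff_of_not_hasTwoY (hx t) (h2 t)
  have hmove : ∀ t, ∀ i ∈ σ (t + 1), i = k t ∨ i = k (t + 1) := by
    intro t i hi
    refine (eq_or_ne i (k t)).imp_right fun hik => (hk (t + 1) i).1 ?_
    rw [dynamics_succ_apply, if_pos hi]
    exact allXReaction_eq_y_of_ne hik.symm ((hk t _).2 rfl)
  have := card_le_of_rFair_of_mem_pair hσ k hmove
  omega

def singleY (k : Fin n) : Fin n → XY :=
  fun j => if j = k then .y else .x

theorem allXReaction_singleY (i k : Fin n) :
    allXReaction n i (singleY k) = if i = k then .x else .y := by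
  split_ifs with hik
  · subst hik
    simp +contextual [allXReaction, singleY]
  · exact allXReaction_eq_y_of_ne (Ne.symm hik) (if_pos rfl)

theorem not_stable_singleY (k : Fin n) : ¬Stable (allXReaction n) (singleY k) := by
  intro h
  have := h k
  simp [allXReaction_singleY, singleY] at this

end AllXReaction

section Rotating

open Fin.CommRing

variable {n : ℕ} [NeZero n]

def rotatingSchedule (t : ℕ) : Finset (Fin n) :=
  {(t : Fin n) - 1, (t : Fin n)}

theorem dynamics_rotatingSchedule [Nontrivial (Fin n)] (t : ℕ) :
    dynamics (allXReaction n) (singleY 0) rotatingSchedule t = singleY (t : Fin n) := by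
  induction t with
  | zero => rfl
  | succ t ih =>
    funext j
    have hne : (t : Fin n) + 1 ≠ t := by simp
    rw [dynamics_succ_apply, ih, allXReaction_singleY]
    by_cases hj : j = t <;> by_cases hj' : j = t + 1 <;> simp_all [rotatingSchedule, singleY]

theorem rFair_rotatingSchedule [Nontrivial (Fin n)] :
    RFair (n - 1) (rotatingSchedule (n := n)) := by
  have hn := Fin.nontrivial_iff_two_le.mp ‹_›
  intro i t0
  set d := (i - (t0 : Fin n)).val
  have hdn : d < n := Fin.isLt _
  have hd : ((t0 + d : ℕ) : Fin n) = i := by simp [d]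
  rcases Nat.lt_or_ge d (n - 1) with h | h
  · exact ⟨t0 + d, by omega, by omega, by simp [rotatingSchedule, hd]⟩
  · -- `i` is the one residue `t0 - 1` that the window misses, but it is activated at `t0`.
    refine ⟨t0, le_rfl, by omega, ?_⟩
    have hneg : ((n - 1 : ℕ) : Fin n) = -1 := by
      rw [Nat.cast_pred (NeZero.pos n), Fin.natCast_self, zero_sub]
    rw [show d = n - 1 by omega, Nat.cast_add, hneg] at hd
    simp [rotatingSchedule, ← hd, sub_eq_add_neg]

end Rotating

/-- For `n ≥ 2`, the system `allXReaction` has exactly two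
stable states (all-`x` and all-`y`); it is `r`-convergent for every
`1 ≤ r < n - 1`, and it is not `(n-1)`-convergent: some initial profile and
`(n-1)`-fair schedule yield dynamics that never reaches a stable state and is
not eventually constant. -/
theorem allXReaction_r_convergence (n : ℕ) (hn : 2 ≤ n) :
    (∀ a : Fin n → XY,
      Stable (allXReaction n) a ↔
        (a = fun _ => XY.x) ∨ (a = fun _ => XY.y)) ∧
    (∀ r : ℕ, 1 ≤ r → r < n - 1 → RConvergent r (allXReaction n)) ∧
    (∃ (s0 : Fin n → XY) (σ : ℕ → Finset (Fin n)),
      (∀ t, (σ t).Nonempty) ∧ RFair (n - 1) σ ∧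
      (∀ t : ℕ, ¬ Stable (allXReaction n) (dynamics (allXReaction n) s0 σ t)) ∧
      ¬ EventuallyConstant (dynamics (allXReaction n) s0 σ)) := by
  have : NeZero n := ⟨by omega⟩
  have : Nontrivial (Fin n) := Fin.nontrivial_iff_two_le.mpr hn
  have hnot_stable (t : ℕ) :
      ¬Stable (allXReaction n) (dynamics (allXReaction n) (singleY 0) rotatingSchedule t) := by
    rw [dynamics_rotatingSchedule]
    exact not_stable_singleY _
  refine ⟨stable_allXReaction_iff, fun r _ hr => allXReaction_rConvergent hr,
    singleY 0, rotatingSchedule, fun _ => Finset.insert_nonempty _ _, rFair_rotatingSchedule,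
    hnot_stable, fun hc => ?_⟩
  obtain ⟨t, ht⟩ := exists_stable_of_eventuallyConstant rFair_rotatingSchedule.fair hc
  exact hnot_stable t ht
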